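/- Let (Ω, ℱ, ℙ) be a probability space and let {V(x) : x ∈ ℤ^d} be a family of nonnegative, integrable random variables. For each x set γ_x := −ln 𝔼[exp(−V(x))], and suppose there is s₀ > 0 with γ_x ≥ 2 s₀ for every x ∈ ℤ^d. For L > 0 let C_L := {x ∈ ℤ^d : |x|_∞ < L} (a finite set of cardinality |C_L|, with |C_L| asymptotically (2L)^d). Assume the product-mixing bound: there is a constant C₂ > 2^d · s₀ such that for every L > 0, |𝔼[∏_{x ∈ C_L} exp(−V(x))] − ∏_{x ∈ C_L} 𝔼[exp(−V(x))]| ≤ exp(−C₂ L^d). Then there exist γ₀ > 0 and L₀ > 0 such that for all L ≥ L₀, ℙ( (1/|C_L|) ∑_{x ∈ C_L} V(x) ≤ s₀ ) ≤ exp(−γ₀ |C_L|). -/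

import Mathlib

/-!
Chernoff's bound with parameter `-1` gives `ℙ(∑ V ≤ s₀ N) ≤ e^{s₀ N} 𝔼[∏ e^{-V x}]`, where
`N = |C_L|`. The mixing bound replaces the expectation of the product by the product of the
expectations, which is at most `e^{-2 s₀ N}`, at the cost of an error `e^{-C₂ L^d}`. Since
`N ≤ (2L + 1)^d ∼ 2^d L^d` and `C₂ > 2^d s₀`, both resulting terms `e^{-s₀ N}` and
`e^{s₀ N - C₂ L^d}` are at most `e^{-2γN}` for some `γ > 0`, and their sum is at most `e^{-γN}`
once `N ≥ L` is large.
-/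

open MeasureTheory Finset
open scoped ProbabilityTheory

/-- The lattice cube `C_L = {x ∈ ℤ^d : |x|_∞ < L}`: for an integer `n`,
`|n| < L` iff `1 - ⌈L⌉ ≤ n ≤ ⌈L⌉ - 1`. -/
noncomputable def latticeCube (d : ℕ) (L : ℝ) : Finset (Fin d → ℤ) :=
  Finset.Icc (fun _ => 1 - ⌈L⌉) (fun _ => ⌈L⌉ - 1)

open Real Filter Topology

lemma card_latticeCube (d : ℕ) (L : ℝ) :
    #(latticeCube d L) = (2 * ⌈L⌉ - 1).toNat ^ d := by
  rw [latticeCube, Pi.card_Icc]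
  simp only [Int.card_Icc, prod_const, card_univ, Fintype.card_fin]
  congr 2
  omega

lemma cast_card_latticeCube (d : ℕ) {L : ℝ} (hL : 0 < L) :
    (#(latticeCube d L) : ℝ) = (2 * ⌈L⌉ - 1 : ℝ) ^ d := by
  have hceil : 0 < ⌈L⌉ := Int.ceil_pos.mpr hL
  rw [card_latticeCube, Nat.cast_pow, ← Int.cast_natCast, Int.toNat_of_nonneg (by omega)]
  push_cast
  rfl

lemma le_card_latticeCube {d : ℕ} (hd : 1 ≤ d) {L : ℝ} (hL : 0 < L) :
    L ≤ #(latticeCube d L) := by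
  have hceil : (1 : ℝ) ≤ ⌈L⌉ := by exact_mod_cast Int.one_le_ceil_iff.mpr hL
  rw [cast_card_latticeCube d hL]
  calc L ≤ 2 * ⌈L⌉ - 1 := by linarith [Int.le_ceil L]
    _ ≤ (2 * ⌈L⌉ - 1 : ℝ) ^ d := le_self_pow₀ (by linarith) (by omega)

lemma card_latticeCube_le (d : ℕ) {L : ℝ} (hL : 0 < L) :
    (#(latticeCube d L) : ℝ) ≤ (2 * L + 1) ^ d := by
  have hceil : (1 : ℝ) ≤ ⌈L⌉ := by exact_mod_cast Int.one_le_ceil_iff.mpr hL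
  rw [cast_card_latticeCube d hL]
  exact pow_le_pow_left₀ (by linarith) (by linarith [Int.ceil_lt_add_one L]) d

lemma eventually_mul_two_mul_add_one_pow_le {d : ℕ} {c C : ℝ} (h : c * 2 ^ d < C) :
    ∀ᶠ L in atTop, c * (2 * L + 1) ^ d ≤ C * L ^ d := by
  have hlim : Tendsto (fun L : ℝ => c * (2 + L⁻¹) ^ d) atTop (𝓝 (c * (2 + 0) ^ d)) :=
    ((tendsto_inv_atTop_zero.const_add 2).pow d).const_mul c
  rw [add_zero] at hlim
  filter_upwards [hlim.eventually_lt_const h, eventually_gt_atTop 0] with L hlt hL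
  calc c * (2 * L + 1) ^ d = c * (2 + L⁻¹) ^ d * L ^ d := by
        rw [mul_assoc, ← mul_pow]; congr 2; field_simp
    _ ≤ C * L ^ d := by gcongr

lemma le_exp_neg_of_le_neg_log {c y : ℝ} (h : c ≤ -log y) : y ≤ exp (-c) := by
  rcases le_or_gt y 0 with hy | hy
  · exact hy.trans (exp_pos _).le
  · exact (log_le_iff_le_exp hy).mp (by linarith)

lemma exp_add_exp_le_exp_neg {x y t : ℝ} (hx : x ≤ -2 * t) (hy : y ≤ -2 * t)
    (ht : log 2 ≤ t) : exp x + exp y ≤ exp (-t) :=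
  calc exp x + exp y ≤ exp (log 2) * exp (-2 * t) := by
        rw [exp_log two_pos]; linarith [exp_le_exp.mpr hx, exp_le_exp.mpr hy]
    _ ≤ exp (-t) := by rw [← exp_add]; gcongr; linarith

section Chernoff

open ProbabilityTheory

variable {Ω : Type*} [MeasurableSpace Ω] {μ : Measure Ω}

lemma measure_le_le_exp_mul_integral_exp_neg [IsFiniteMeasure μ] {S : Ω → ℝ}
    (hS : AEMeasurable S μ) (hS0 : ∀ ω, 0 ≤ S ω) (a : ℝ) :
    μ {ω | S ω ≤ a} ≤ ENNReal.ofReal (exp a * ∫ ω, exp (-S ω) ∂μ) := by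
  have hint : Integrable (fun ω => exp (-1 * S ω)) μ := by
    refine .of_bound (measurable_exp.comp_aemeasurable (hS.const_mul (-1))).aestronglyMeasurable
      1 (ae_of_all _ fun ω => ?_)
    rw [norm_of_nonneg (exp_pos _).le, exp_le_one_iff]
    linarith [hS0 ω]
  rw [← ofReal_measureReal]
  refine ENNReal.ofReal_le_ofReal ?_
  simpa [mgf] using measure_le_le_exp_mul_mgf a (by norm_num : (-1 : ℝ) ≤ 0) hint

lemma measure_average_le_le_of_integral_prod_exp_neg_le {ι : Type*}
    [IsFiniteMeasure μ] {s : Finset ι} (hs : s.Nonempty) {V : ι → Ω → ℝ}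
    (hVmeas : ∀ x, Measurable (V x)) (hVnonneg : ∀ x ω, 0 ≤ V x ω) {a t ε : ℝ}
    (hlog : ∀ x ∈ s, t ≤ -log (∫ ω, exp (-V x ω) ∂μ))
    (hmix : ∫ ω, ∏ x ∈ s, exp (-V x ω) ∂μ ≤ (∏ x ∈ s, ∫ ω, exp (-V x ω) ∂μ) + ε) :
    μ {ω | 1 / (#s : ℝ) * ∑ x ∈ s, V x ω ≤ a}
      ≤ ENNReal.ofReal (exp (a * #s) * (exp (-t * #s) + ε)) := by
  have hN : (0 : ℝ) < #s := by exact_mod_cast hs.card_pos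
  have hprod : ∏ x ∈ s, ∫ ω, exp (-V x ω) ∂μ ≤ exp (-t * #s) :=
    calc ∏ x ∈ s, ∫ ω, exp (-V x ω) ∂μ ≤ ∏ _x ∈ s, exp (-t) :=
          prod_le_prod (fun x _ => integral_nonneg fun ω => (exp_pos _).le)
            fun x hx => le_exp_neg_of_le_neg_log (hlog x hx)
      _ = exp (-t * #s) := by rw [prod_const, ← exp_nat_mul]; ring_nf
  have hexp_sum : ∀ ω, exp (-∑ x ∈ s, V x ω) = ∏ x ∈ s, exp (-V x ω) := fun ω => by
    rw [← sum_neg_distrib, exp_sum]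
  have hset : {ω | 1 / (#s : ℝ) * ∑ x ∈ s, V x ω ≤ a} = {ω | ∑ x ∈ s, V x ω ≤ a * #s} := by
    ext ω
    rw [Set.mem_ofPred_eq, Set.mem_ofPred_eq, one_div, inv_mul_le_iff₀ hN, mul_comm]
  rw [hset]
  refine (measure_le_le_exp_mul_integral_exp_neg
    (Finset.measurable_sum s fun x _ => hVmeas x).aemeasurable
    (fun ω => sum_nonneg fun x _ => hVnonneg x ω) _).trans (ENNReal.ofReal_le_ofReal ?_)
  simp_rw [hexp_sum]
  gcongr
  exact hmix.trans (by gcongr)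

end Chernoff

theorem large_deviation_correlated_field_general
    {Ω : Type*} [MeasureSpace Ω] [IsProbabilityMeasure (ℙ : Measure Ω)]
    (d : ℕ) (hd : 1 ≤ d)
    (V : (Fin d → ℤ) → Ω → ℝ)
    (hVmeas : ∀ x, Measurable (V x))
    (hVnonneg : ∀ x ω, 0 ≤ V x ω)
    (s₀ : ℝ) (hs₀ : 0 < s₀)
    (hγx : ∀ x : Fin d → ℤ, 2 * s₀ ≤ -Real.log (∫ ω, Real.exp (-(V x ω))))
    (C₂ : ℝ) (hC₂ : 2 ^ d * s₀ < C₂)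
    (hmix : ∀ L : ℝ, 0 < L →
      |(∫ ω, ∏ x ∈ latticeCube d L, Real.exp (-(V x ω))) -
          ∏ x ∈ latticeCube d L, ∫ ω, Real.exp (-(V x ω))| ≤ Real.exp (-C₂ * L ^ d)) :
    ∃ γ₀ > 0, ∃ L₀ > 0, ∀ L ≥ L₀,
      ℙ {ω | (1 / ((latticeCube d L).card : ℝ)) * ∑ x ∈ latticeCube d L, V x ω ≤ s₀}
        ≤ ENNReal.ofReal (Real.exp (-γ₀ * ((latticeCube d L).card : ℝ))) := by
  obtain ⟨c, hs₀c, hcC₂⟩ : ∃ c, s₀ < c ∧ c * 2 ^ d < C₂ :=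
    _root_.exists_between ((lt_div_iff₀ (by positivity)).mpr (by linarith)) |>.imp
      fun c hc => ⟨hc.1, (lt_div_iff₀ (by positivity)).mp hc.2⟩
  obtain ⟨γ, hγpos, hγs₀, hγc⟩ : ∃ γ > 0, 2 * γ ≤ s₀ ∧ s₀ + 2 * γ ≤ c :=
    ⟨min s₀ (c - s₀) / 2, by positivity, by linarith [min_le_left s₀ (c - s₀)],
      by linarith [min_le_right s₀ (c - s₀)]⟩
  have hbound : ∀ᶠ L in atTop, 0 < L ∧
      ℙ {ω | (1 / ((latticeCube d L).card : ℝ)) * ∑ x ∈ latticeCube d L, V x ω ≤ s₀}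
        ≤ ENNReal.ofReal (Real.exp (-γ * ((latticeCube d L).card : ℝ))) := by
    filter_upwards [eventually_gt_atTop 0, eventually_mul_two_mul_add_one_pow_le hcC₂,
      eventually_ge_atTop (log 2 / γ)] with L hL hcL hlogL
    have hLN : L ≤ #(latticeCube d L) := le_card_latticeCube hd hL
    have hNc : (#(latticeCube d L) : ℝ) ≤ (2 * L + 1) ^ d := card_latticeCube_le d hL
    have hne : (latticeCube d L).Nonempty := card_pos.mp (by exact_mod_cast hL.trans_le hLN)
    have hmixL := sub_le_iff_le_add'.mp ((le_abs_self _).trans (hmix L hL))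
    refine ⟨hL, (measure_average_le_le_of_integral_prod_exp_neg_le hne hVmeas hVnonneg
      (fun x _ => by simpa only [neg_mul] using hγx x) hmixL).trans
      (ENNReal.ofReal_le_ofReal ?_)⟩
    rw [mul_add, ← exp_add, ← exp_add, neg_mul γ]
    generalize (#(latticeCube d L) : ℝ) = N at *
    refine exp_add_exp_le_exp_neg ?_ ?_ ?_
    · nlinarith
    · nlinarith [mul_le_mul_of_nonneg_left hNc (hs₀.trans hs₀c).le]
    · rw [div_le_iff₀ hγpos] at hlogL; nlinarith
  obtain ⟨L₀, hL₀⟩ := eventually_atTop.mp hbound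
  exact ⟨γ, hγpos, L₀, (hL₀ L₀ le_rfl).1, fun L hL => (hL₀ L hL).2⟩

/-- Large deviation estimate for the empirical average of a correlated
nonnegative random field under a Rosenblatt-type product-mixing bound. -/
theorem large_deviation_correlated_field
    {Ω : Type*} [MeasureSpace Ω] [IsProbabilityMeasure (ℙ : Measure Ω)]
    (d : ℕ) (hd : 1 ≤ d)
    (V : (Fin d → ℤ) → Ω → ℝ)
    (hVmeas : ∀ x, Measurable (V x))
    (hVnonneg : ∀ x ω, 0 ≤ V x ω)
    (hVint : ∀ x, Integrable (V x))
    (s₀ : ℝ) (hs₀ : 0 < s₀)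
    (hγx : ∀ x : Fin d → ℤ, 2 * s₀ ≤ -Real.log (∫ ω, Real.exp (-(V x ω))))
    (C₂ : ℝ) (hC₂ : 2 ^ d * s₀ < C₂)
    (hmix : ∀ L : ℝ, 0 < L →
      |(∫ ω, ∏ x ∈ latticeCube d L, Real.exp (-(V x ω))) -
          ∏ x ∈ latticeCube d L, ∫ ω, Real.exp (-(V x ω))| ≤ Real.exp (-C₂ * L ^ d)) :
    ∃ γ₀ > 0, ∃ L₀ > 0, ∀ L ≥ L₀,
      ℙ {ω | (1 / ((latticeCube d L).card : ℝ)) * ∑ x ∈ latticeCube d L, V x ω ≤ s₀}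
        ≤ ENNReal.ofReal (Real.exp (-γ₀ * ((latticeCube d L).card : ℝ))) :=
  large_deviation_correlated_field_general d hd V hVmeas hVnonneg s₀ hs₀ hγx C₂ hC₂ hmix
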